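/- arXiv:0807.2205 — 2 statements merged into one kernel-verified Lean document; each statement's English description precedes it below -/
import Mathlib

section
/- Let X be a block subspace and ℬ ⊆ E^∞, and suppose player I has a strategy in the infinite asymptotic game F_X to play in ℬ. Then for every sequence Δ = (δᵢ) of strictly positive reals there are finite intervals I₀ < I₁ < I₂ < ⋯ of ℕ (each interval lying entirely below the next) such that every block sequence (xᵢ) ∈ 𝔅(X) with the property that for all n there exists m with I₀ < xₙ < I_m < xₙ₊₁ (meaning max I₀ < min supp xₙ, max supp xₙ < min I_m, and max I_m < min supp xₙ₊₁) belongs to ℬ_Δ. -/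
section Defs

variable {𝔽 : Type} [Field 𝔽] {E : Type} [AddCommGroup E] [Module 𝔽 E]

/-- The support of a vector with respect to the basis `b`. -/
noncomputable def supp (b : Module.Basis ℕ 𝔽 E) (x : E) : Finset ℕ :=
  (b.repr x).support

/-- `VecLt b x y` means `x < y`: every element of the support of `x` is smaller than
every element of the support of `y`. -/
def VecLt (b : Module.Basis ℕ 𝔽 E) (x y : E) : Prop :=
  ∀ m ∈ supp b x, ∀ n ∈ supp b y, m < n

/-- `NatLt b k x` means `k < x`: `k` is smaller than every element of the support of `x`. -/
def NatLt (b : Module.Basis ℕ 𝔽 E) (k : ℕ) (x : E) : Prop :=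
  ∀ n ∈ supp b x, k < n

/-- An infinite block sequence: a sequence of nonzero vectors with `x n < x (n + 1)`. -/
def IsBlockSeq (b : Module.Basis ℕ 𝔽 E) (x : ℕ → E) : Prop :=
  (∀ n, x n ≠ 0) ∧ ∀ n, VecLt b (x n) (x (n + 1))

/-- A finite block sequence: a list of nonzero vectors, consecutively increasing in the
block ordering. -/
def IsFinBlockSeq (b : Module.Basis ℕ 𝔽 E) (l : List E) : Prop :=
  (∀ x ∈ l, x ≠ 0) ∧ l.Chain' (VecLt b)

/-- A block subspace: a subspace spanned by an infinite block sequence. -/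
def IsBlockSubspace (b : Module.Basis ℕ 𝔽 E) (X : Submodule 𝔽 E) : Prop :=
  ∃ y : ℕ → E, IsBlockSeq b y ∧ X = Submodule.span 𝔽 (Set.range y)

/-- The list of the first `n` values of a sequence. -/
def hist {α : Type _} (x : ℕ → α) (n : ℕ) : List α :=
  List.ofFn (fun j : Fin n => x j)

/-- The concatenation of a finite prefix with an infinite sequence. -/
def prefCat {α : Type _} (l : List α) (x : ℕ → α) : ℕ → α := fun n =>
  if h : n < l.length then l.get ⟨n, h⟩ else x (n - l.length)

/-- Player II has a strategy in Gowers' game `G_X(pre)` below `X` to play in `A`: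
player I plays infinite-dimensional subspaces `Y i ≤ X`, player II answers with a
nonzero vector of `Y i`, the vectors played by II forming a block sequence, and the
outcome (the prefix `pre` followed by II's vectors) lies in `A`. -/
def IIWinsG (b : Module.Basis ℕ 𝔽 E) (X : Submodule 𝔽 E) (pre : List E) (A : Set (ℕ → E)) :
    Prop :=
  ∃ σ : List (Submodule 𝔽 E) → E,
    ∀ Y : ℕ → Submodule 𝔽 E,
      (∀ i, Y i ≤ X ∧ ¬FiniteDimensional 𝔽 ↥(Y i)) →
      (∀ i, σ (hist Y (i + 1)) ∈ Y i ∧ σ (hist Y (i + 1)) ≠ 0 ∧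
          VecLt b (σ (hist Y (i + 1))) (σ (hist Y (i + 2)))) ∧
        prefCat pre (fun i => σ (hist Y (i + 1))) ∈ A

/-- Player I has a strategy in the infinite asymptotic game `F_X(pre)` below `X` to play
in `A`: player I plays strictly increasing natural numbers `n i`, player II answers with
nonzero vectors of `X` with `n i < x i` forming a block sequence, and the outcome
(the prefix `pre` followed by II's vectors) lies in `A`. -/
def IWinsF (b : Module.Basis ℕ 𝔽 E) (X : Submodule 𝔽 E) (pre : List E) (A : Set (ℕ → E)) :
    Prop :=
  ∃ σ : List E → ℕ,
    ∀ x : ℕ → E,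
      (∀ i, x i ∈ X ∧ x i ≠ 0 ∧ NatLt b (σ (hist x i)) (x i) ∧
          VecLt b (x i) (x (i + 1))) →
      (∀ i, σ (hist x i) < σ (hist x (i + 1))) ∧ prefCat pre x ∈ A

/-- A set `A ⊆ E^∞` is strategically Ramsey if for every block subspace `V` and every
finite block sequence `z`, there is a block subspace `W ≤ V` such that either II has a
strategy in `G_W(z)` to play in `A`, or I has a strategy in `F_W(z)` to play in `Aᶜ`. -/
def StrategicallyRamsey (b : Module.Basis ℕ 𝔽 E) (A : Set (ℕ → E)) : Prop :=
  ∀ V : Submodule 𝔽 E, IsBlockSubspace b V → ∀ z : List E, IsFinBlockSeq b z →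
    ∃ W : Submodule 𝔽 E, W ≤ V ∧ IsBlockSubspace b W ∧
      (IIWinsG b W z A ∨ IWinsF b W z Aᶜ)

/-- `𝔅(X)`: the set of infinite block sequences of vectors of `X` of norm at most `1`. -/
def BlockSeqIn (b : Module.Basis ℕ 𝔽 E) (Nm : E → ℝ) (X : Submodule 𝔽 E) : Set (ℕ → E) :=
  {x | IsBlockSeq b x ∧ ∀ i, x i ∈ X ∧ Nm (x i) ≤ 1}

/-- The `Δ`-expansion `A_Δ` of a set `A ⊆ E^∞`. -/
def Expand (Nm : E → ℝ) (Δ : ℕ → ℝ) (A : Set (ℕ → E)) : Set (ℕ → E) :=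
  {z | ∃ x ∈ A, ∀ i, Nm (x i - z i) < Δ i}

/-- A set `A ⊆ E^∞` is large if it meets `𝔅(X)` for every block subspace `X`. -/
def Large (b : Module.Basis ℕ 𝔽 E) (Nm : E → ℝ) (A : Set (ℕ → E)) : Prop :=
  ∀ X : Submodule 𝔽 E, IsBlockSubspace b X → (A ∩ BlockSeqIn b Nm X).Nonempty

end Defs

/-!
Norm balls of a finite-dimensional space over a subfield `𝕂 ⊆ ℝ` are totally bounded: adjoin
one direction `v` at a time, approximate first for the quotient seminorm `⨅ t, p (x + t • v)`,
then the remaining multiple of `v` on a finite grid of `𝕂`. So for every finite `S ⊆ ℕ` and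
every precision, finitely many nonzero vectors of `X` supported in `S` approximate the whole unit
ball of `X` supported in `S`. Positions of the game built from such approximants of vectors
supported below `L` are therefore finitely many, and I's answers to them are bounded; the
intervals are chosen so that `I_m` lies above all answers to positions supported below `min I_m`.
Replacing each `xₙ` of a block sequence as in the statement by an approximant `yₙ` with
`supp yₙ ⊆ supp xₙ` then gives a legal play of II against I's strategy, so `y ∈ B` and
`x ∈ B_Δ`.
-/

open Set Submodule

namespace Seminorm

variable {𝕜 M : Type*} [NormedField 𝕜] [AddCommGroup M] [Module 𝕜 M]

theorem bddBelow_range_apply_add_smul (p : Seminorm 𝕜 M) (x v : M) :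
    BddBelow (range fun t : 𝕜 => p (x + t • v)) :=
  ⟨0, by rintro _ ⟨t, rfl⟩; exact apply_nonneg p _⟩

/-- The seminorm induced by `p` on `M ⧸ 𝕜 ∙ v`, pulled back to `M`. -/
noncomputable def infAlong (p : Seminorm 𝕜 M) (v : M) : Seminorm 𝕜 M :=
  Seminorm.ofSMulLE (fun x => ⨅ t : 𝕜, p (x + t • v))
    (le_antisymm (ciInf_le_of_le (p.bddBelow_range_apply_add_smul 0 v) 0 (by simp))
      (le_ciInf fun _ => apply_nonneg _ _))
    (fun x y => le_ciInf_add_ciInf fun s t => by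
      refine ciInf_le_of_le (p.bddBelow_range_apply_add_smul _ v) (s + t) ?_
      rw [add_smul, add_add_add_comm]
      exact map_add_le_add p _ _)
    (fun r x => by
      rw [Real.mul_iInf_of_nonneg (norm_nonneg r)]
      refine le_ciInf fun t => ciInf_le_of_le (p.bddBelow_range_apply_add_smul _ v) (r * t) ?_
      rw [mul_smul, ← smul_add, map_smul_eq_mul])

theorem infAlong_le (p : Seminorm 𝕜 M) (v x : M) (t : 𝕜) : p.infAlong v x ≤ p (x + t • v) :=
  ciInf_le (p.bddBelow_range_apply_add_smul x v) t

theorem exists_lt_of_infAlong_lt {p : Seminorm 𝕜 M} {v x : M} {r : ℝ} (h : p.infAlong v x < r) :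
    ∃ t : 𝕜, p (x + t • v) < r :=
  exists_lt_of_ciInf_lt h

end Seminorm

theorem Subfield.totallyBounded_closedBall (𝕂 : Subfield ℝ) (R : ℝ) :
    TotallyBounded (Metric.closedBall (0 : 𝕂) R) :=
  totallyBounded_preimage (isUniformEmbedding_subtype_val (p := (· ∈ 𝕂))).isUniformInducing
    (isCompact_closedBall (0 : ℝ) R).totallyBounded

namespace Seminorm

variable {𝕂 : Subfield ℝ} {M : Type*} [AddCommGroup M] [Module 𝕂 M]

theorem exists_finite_net_smul (p : Seminorm 𝕂 M) (v : M) (R : ℝ) {δ : ℝ} (hδ : 0 < δ) :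
    ∃ G : Set 𝕂, G.Finite ∧ ∀ r : 𝕂, p (r • v) ≤ R → ∃ q ∈ G, p ((r - q) • v) < δ := by
  rcases (apply_nonneg p v).eq_or_lt with hv | hv
  · exact ⟨{0}, finite_singleton 0, fun r _ => ⟨0, rfl, by simp [map_smul_eq_mul, ← hv, hδ]⟩⟩
  obtain ⟨G, hG, hcover⟩ := Metric.totallyBounded_iff.mp
    (𝕂.totallyBounded_closedBall (R / p v)) (δ / p v) (by positivity)
  refine ⟨G, hG, fun r hr => ?_⟩
  rw [map_smul_eq_mul, ← le_div_iff₀ hv, ← mem_closedBall_zero_iff] at hr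
  obtain ⟨q, hq, hrq⟩ := mem_iUnion₂.mp (hcover hr)
  refine ⟨q, hq, ?_⟩
  rwa [map_smul_eq_mul, ← lt_div_iff₀ hv, ← dist_eq_norm]

theorem exists_finite_net_span (p : Seminorm 𝕂 M) {s : Set M} (hs : s.Finite) (R : ℝ)
    {δ : ℝ} (hδ : 0 < δ) :
    ∃ F : Set M, F.Finite ∧ F ⊆ span 𝕂 s ∧ ∀ x ∈ span 𝕂 s, p x ≤ R → ∃ y ∈ F, p (x - y) < δ := by
  induction s, hs using Set.Finite.induction_on generalizing p R δ with
  | empty =>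
    refine ⟨{0}, finite_singleton 0, by simp, fun x hx _ => ⟨0, rfl, ?_⟩⟩
    rw [span_empty, mem_bot] at hx
    simpa [hx] using hδ
  | @insert v s _ hs ih =>
    obtain ⟨F, hF, hFs, hnet⟩ := ih (p.infAlong v) R (half_pos hδ)
    obtain ⟨C, hC⟩ := (hF.image p).bddAbove
    obtain ⟨G, hG, hgrid⟩ := p.exists_finite_net_smul v (R + C + δ / 2) (half_pos hδ)
    refine ⟨image2 (fun y q => y + q • v) F G, hF.image2 _ hG, ?_, ?_⟩
    · rintro _ ⟨y, hy, q, -, rfl⟩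
      exact add_mem (span_mono (subset_insert v s) (hFs hy))
        (smul_mem _ q (subset_span (mem_insert v s)))
    rintro x hx hxR
    obtain ⟨a, z, hz, rfl⟩ := mem_span_insert.mp hx
    obtain ⟨y, hyF, hzy⟩ := hnet z hz ((p.infAlong_le v z a).trans (by rwa [add_comm]))
    obtain ⟨c, hc⟩ := exists_lt_of_infAlong_lt hzy
    have hac : p ((a - c) • v) ≤ R + C + δ / 2 := by
      have : (a - c) • v = a • v + z - y - (z - y + c • v) := by module
      rw [this]
      calc _ ≤ p (a • v + z - y) + p (z - y + c • v) := map_sub_le_add p _ _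
        _ ≤ p (a • v + z) + p y + δ / 2 := by gcongr; exact map_sub_le_add p _ _
        _ ≤ R + C + δ / 2 := by gcongr; exact hC (mem_image_of_mem p hyF)
    obtain ⟨q, hq, hacq⟩ := hgrid (a - c) hac
    refine ⟨y + q • v, mem_image2_of_mem hyF hq, ?_⟩
    have : a • v + z - (y + q • v) = (z - y + c • v) + (a - c - q) • v := by module
    rw [this]
    calc _ ≤ p (z - y + c • v) + p ((a - c - q) • v) := map_add_le_add p _ _
      _ < δ / 2 + δ / 2 := add_lt_add hc hacq
      _ = δ := add_halves δ

theorem exists_smul_lt (p : Seminorm 𝕂 M) (v : M) {ε : ℝ} (hε : 0 < ε) :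
    ∃ t : 𝕂, t ≠ 0 ∧ p (t • v) < ε := by
  obtain ⟨n, hn⟩ := exists_nat_gt (p v / ε)
  refine ⟨((n : 𝕂) + 1)⁻¹, inv_ne_zero (Nat.cast_add_one_ne_zero n), ?_⟩
  have hnorm : ‖((n : 𝕂) + 1)⁻¹‖ = ((n : ℝ) + 1)⁻¹ := by
    rw [norm_inv, AddSubgroupClass.coe_norm]
    push_cast
    rw [Real.norm_of_nonneg (by positivity)]
  rw [map_smul_eq_mul, hnorm, inv_mul_lt_iff₀ (by positivity)]
  rw [div_lt_iff₀ hε] at hn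
  nlinarith

theorem exists_finite_net_span_ne_zero (p : Seminorm 𝕂 M) {s : Set M} (hs : s.Finite)
    (R : ℝ) {δ : ℝ} (hδ : 0 < δ) :
    ∃ F : Set M, F.Finite ∧ F ⊆ span 𝕂 s ∧ 0 ∉ F ∧
      ∀ x ∈ span 𝕂 s, x ≠ 0 → p x ≤ R → ∃ y ∈ F, p (x - y) < δ := by
  by_cases hs0 : ∀ v ∈ s, v = 0
  · refine ⟨∅, finite_empty, empty_subset _, notMem_empty 0, fun x hx hx0 _ => ?_⟩
    rw [span_eq_bot.mpr hs0, mem_bot] at hx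
    exact absurd hx hx0
  push Not at hs0
  obtain ⟨v, hv, hv0⟩ := hs0
  obtain ⟨t, ht0, htv⟩ := p.exists_smul_lt v (half_pos hδ)
  obtain ⟨F, hF, hFs, hnet⟩ := p.exists_finite_net_span hs R (half_pos hδ)
  refine ⟨insert (t • v) (F \ {0}), hF.sdiff.insert _, ?_, ?_, ?_⟩
  · exact insert_subset (smul_mem _ t (subset_span hv)) (sdiff_subset.trans hFs)
  · rintro (h | ⟨-, h⟩)
    · exact smul_ne_zero ht0 hv0 h.symm
    · exact h rfl
  intro x hx _ hxR
  obtain ⟨y, hyF, hxy⟩ := hnet x hx hxR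
  by_cases hy0 : y = 0
  · refine ⟨t • v, mem_insert _ _, ?_⟩
    rw [hy0, sub_zero] at hxy
    linarith [map_sub_le_add p x (t • v)]
  · exact ⟨y, mem_insert_of_mem _ ⟨hyF, hy0⟩, by linarith⟩

end Seminorm

section Support

variable {𝔽 : Type} [Field 𝔽] {E : Type} [AddCommGroup E] [Module 𝔽 E]

noncomputable def supportedIn (b : Module.Basis ℕ 𝔽 E) (S : Set ℕ) : Submodule 𝔽 E :=
  (Finsupp.supported 𝔽 𝔽 S).comap (b.repr : E →ₗ[𝔽] ℕ →₀ 𝔽)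

theorem mem_supportedIn {b : Module.Basis ℕ 𝔽 E} {S : Finset ℕ} {x : E} :
    x ∈ supportedIn b S ↔ supp b x ⊆ S := by
  simp [supportedIn, supp, Finsupp.mem_supported]

theorem fg_supportedIn (b : Module.Basis ℕ 𝔽 E) (S : Finset ℕ) : (supportedIn b S).FG := by
  rw [supportedIn, comap_equiv_eq_map_symm, Finsupp.supported_eq_span_single]
  exact (fg_span (S.finite_toSet.image _)).map _

theorem supp_nonempty (b : Module.Basis ℕ 𝔽 E) {x : E} (hx : x ≠ 0) : (supp b x).Nonempty :=
  Finsupp.support_nonempty_iff.mpr ((map_ne_zero_iff b.repr b.repr.injective).mpr hx)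

end Support

theorem Seminorm.exists_finite_net_supportedIn {𝕂 : Subfield ℝ} {E : Type} [AddCommGroup E]
    [Module 𝕂 E] (p : Seminorm 𝕂 E) (b : Module.Basis ℕ 𝕂 E) (X : Submodule 𝕂 E)
    (S : Finset ℕ) (R : ℝ) {δ : ℝ} (hδ : 0 < δ) :
    ∃ F : Set E, F.Finite ∧ (∀ y ∈ F, y ∈ X ∧ y ≠ 0 ∧ supp b y ⊆ S) ∧
      ∀ x ∈ X, x ≠ 0 → supp b x ⊆ S → p x ≤ R → ∃ y ∈ F, p (x - y) < δ := by
  obtain ⟨s, hs⟩ := (fg_supportedIn b S).of_le (inf_le_right : X ⊓ supportedIn b S ≤ _)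
  obtain ⟨F, hF, hFs, hF0, hnet⟩ := p.exists_finite_net_span_ne_zero s.finite_toSet R hδ
  rw [hs] at hFs hnet
  refine ⟨F, hF, fun y hy => ?_,
    fun x hxX hx0 hxS hxR => hnet x ⟨hxX, mem_supportedIn.mpr hxS⟩ hx0 hxR⟩
  obtain ⟨hyX, hyS⟩ := hFs hy
  exact ⟨hyX, fun h => hF0 (h ▸ hy), mem_supportedIn.mp hyS⟩

namespace IsBlockSeq

variable {𝔽 : Type} [Field 𝔽] {E : Type} [AddCommGroup E] [Module 𝔽 E]
  {b : Module.Basis ℕ 𝔽 E} {x : ℕ → E}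

theorem vecLt (hx : IsBlockSeq b x) {i j : ℕ} (hij : i < j) : VecLt b (x i) (x j) := by
  induction j, hij using Nat.le_induction with
  | base => exact hx.2 i
  | succ j _ ih =>
    intro m hm n hn
    obtain ⟨k, hk⟩ := supp_nonempty b (hx.1 j)
    exact (ih m hm k hk).trans (hx.2 j k hk n hn)

theorem le_of_mem_supp (hx : IsBlockSeq b x) {n j : ℕ} (hj : j ∈ supp b (x n)) : n ≤ j := by
  induction n generalizing j with
  | zero => exact j.zero_le
  | succ n ih =>
    obtain ⟨k, hk⟩ := supp_nonempty b (hx.1 n)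
    exact (ih hk).trans_lt (hx.2 n k hk j hj)

theorem lt_of_supp_subset_range (hx : IsBlockSeq b x) {n L : ℕ}
    (hL : supp b (x n) ⊆ Finset.range L) : n < L := by
  obtain ⟨j, hj⟩ := supp_nonempty b (hx.1 n)
  exact (hx.le_of_mem_supp hj).trans_lt (Finset.mem_range.mp (hL hj))

theorem supp_subset_range_of_le (hx : IsBlockSeq b x) {k n L : ℕ}
    (hL : supp b (x n) ⊆ Finset.range L) (hkn : k ≤ n) : supp b (x k) ⊆ Finset.range L := by
  rcases hkn.eq_or_lt with rfl | hkn
  · exact hL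
  intro j hj
  obtain ⟨i, hi⟩ := supp_nonempty b (hx.1 n)
  exact Finset.mem_range.mpr ((hx.vecLt hkn j hj i hi).trans (Finset.mem_range.mp (hL hi)))

theorem natLt_of_gaps (hx : IsBlockSeq b x) {lo hi f : ℕ → ℕ}
    (hgap : ∀ n, ∃ m, NatLt b (hi 0) (x n) ∧ (∀ j ∈ supp b (x n), j < lo m) ∧
      NatLt b (hi m) (x (n + 1)))
    (hf : ∀ m n, n ≤ lo m → (∀ k < n, supp b (x k) ⊆ Finset.range (lo m)) → f n ≤ hi m)
    (n : ℕ) : NatLt b (f n) (x n) := by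
  intro j hj
  cases n with
  | zero =>
    obtain ⟨m, h0, -, -⟩ := hgap 0
    exact (hf 0 0 (Nat.zero_le _) fun k hk => absurd hk k.not_lt_zero).trans_lt (h0 j hj)
  | succ n =>
    obtain ⟨m, -, hxm, hm⟩ := hgap n
    replace hxm : supp b (x n) ⊆ Finset.range (lo m) := fun i hi => Finset.mem_range.mpr (hxm i hi)
    refine (hf m (n + 1) (hx.lt_of_supp_subset_range hxm) fun k hk => ?_).trans_lt (hm j hj)
    exact hx.supp_subset_range_of_le hxm (Nat.lt_succ_iff.mp hk)

end IsBlockSeq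

theorem prefCat_nil {α : Type*} (x : ℕ → α) : prefCat [] x = x := by
  funext n
  simp [prefCat]

theorem Set.Finite.setOf_length_le_forall_mem {α : Type*} {s : Set α} (hs : s.Finite) (n : ℕ) :
    {l : List α | l.length ≤ n ∧ ∀ v ∈ l, v ∈ s}.Finite := by
  have := hs.to_subtype
  refine ((List.finite_length_le s n).image (List.map Subtype.val)).subset ?_
  rintro l ⟨hl, hls⟩
  lift l to List s using hls
  exact ⟨l, by simpa using hl, rfl⟩

theorem exists_intervals_bounding {α : Type*} (σ : List α → ℕ) {P : ℕ → Set α}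
    (hP : ∀ L, (P L).Finite) :
    ∃ lo hi : ℕ → ℕ, (∀ k, lo k ≤ hi k) ∧ (∀ k, hi k < lo (k + 1)) ∧
      ∀ k (l : List α), l.length ≤ lo k → (∀ v ∈ l, v ∈ P (lo k)) → σ l ≤ hi k := by
  choose M hM using fun L => (((hP L).setOf_length_le_forall_mem L).image σ).bddAbove
  let lo k := (fun L => max L (M L) + 1)^[k] 0
  refine ⟨lo, fun k => max (lo k) (M (lo k)), fun k => le_max_left _ _, fun k => ?_,
    fun k l hl hlP => (hM (lo k) ⟨l, ⟨hl, hlP⟩, rfl⟩).trans (le_max_right _ _)⟩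
  simp only [lo, Function.iterate_succ_apply']
  omega

theorem intervals_of_IWinsF_general
    (𝕂 : Subfield ℝ)
    {E : Type} [AddCommGroup E] [Module 𝕂 E]
    (b : Module.Basis ℕ 𝕂 E) (Nm : E → ℝ)
    (hNadd : ∀ x y : E, Nm (x + y) ≤ Nm x + Nm y)
    (hNsmul : ∀ (a : 𝕂) (x : E), Nm (a • x) = |(a : ℝ)| * Nm x)
    (X : Submodule 𝕂 E)
    (B : Set (ℕ → E)) (hB : IWinsF b X [] B)
    (Δ : ℕ → ℝ) (hΔ : ∀ i, 0 < Δ i) :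
    ∃ lo hi : ℕ → ℕ, (∀ k, lo k ≤ hi k) ∧ (∀ k, hi k < lo (k + 1)) ∧
      ∀ x ∈ BlockSeqIn b Nm X,
        (∀ n, ∃ m, NatLt b (hi 0) (x n) ∧ (∀ j ∈ supp b (x n), j < lo m) ∧
          NatLt b (hi m) (x (n + 1))) →
        x ∈ Expand Nm Δ B := by
  obtain ⟨σ, hσ⟩ := hB
  let p : Seminorm 𝕂 E := Seminorm.of Nm hNadd hNsmul
  choose net hnet_fin hnet_mem hnet using fun (S : Finset ℕ) (n : ℕ) =>
    p.exists_finite_net_supportedIn b X S 1 (hΔ n)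
  let P (L : ℕ) : Set E := ⋃ S ∈ (Finset.range L).powerset, ⋃ n ∈ Finset.range L, net S n
  have hP_fin (L : ℕ) : (P L).Finite := (Finset.finite_toSet _).biUnion fun S _ =>
    (Finset.finite_toSet _).biUnion fun n _ => hnet_fin S n
  obtain ⟨lo, hi, hlohi, hhilo, hσ_le⟩ := exists_intervals_bounding σ hP_fin
  refine ⟨lo, hi, hlohi, hhilo, ?_⟩
  rintro x ⟨hx, hxX⟩ hgap
  choose y hy hxy using fun n => hnet _ n (x n) (hxX n).1 (hx.1 n) subset_rfl (hxX n).2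
  have hyX (n : ℕ) : y n ∈ X ∧ y n ≠ 0 ∧ supp b (y n) ⊆ supp b (x n) := hnet_mem _ n _ (hy n)
  have hσx : ∀ n, NatLt b (σ (hist y n)) (x n) := hx.natLt_of_gaps hgap fun m n hn hxn => by
    refine hσ_le m _ (by simpa [hist] using hn) fun v hv => ?_
    obtain ⟨k, rfl⟩ := List.mem_ofFn.mp hv
    exact mem_iUnion₂.mpr ⟨_, Finset.mem_powerset.mpr (hxn k k.isLt), mem_iUnion₂.mpr
      ⟨k, Finset.mem_range.mpr (hx.lt_of_supp_subset_range (hxn k k.isLt)), hy k⟩⟩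
  have hyB : y ∈ B := by
    rw [← prefCat_nil y]
    exact (hσ y fun i => ⟨(hyX i).1, (hyX i).2.1, fun j hj => hσx i j ((hyX i).2.2 hj),
      fun j hj k hk => hx.2 i j ((hyX i).2.2 hj) k ((hyX (i + 1)).2.2 hk)⟩).2
  exact ⟨y, hyB, fun n => (map_sub_rev p (y n) (x n)).trans_lt (hxy n)⟩

theorem intervals_of_IWinsF
    (𝕂 : Subfield ℝ) [Countable 𝕂]
    {E : Type} [AddCommGroup E] [Module 𝕂 E]
    (b : Module.Basis ℕ 𝕂 E) (Nm : E → ℝ)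
    (hN0 : ∀ x : E, Nm x = 0 ↔ x = 0)
    (hNadd : ∀ x y : E, Nm (x + y) ≤ Nm x + Nm y)
    (hNsmul : ∀ (a : 𝕂) (x : E), Nm (a • x) = |(a : ℝ)| * Nm x)
    (hNval : ∀ x : E, Nm x ∈ 𝕂)
    (X : Submodule 𝕂 E) (hX : IsBlockSubspace b X)
    (B : Set (ℕ → E)) (hB : IWinsF b X [] B)
    (Δ : ℕ → ℝ) (hΔ : ∀ i, 0 < Δ i) :
    ∃ lo hi : ℕ → ℕ, (∀ k, lo k ≤ hi k) ∧ (∀ k, hi k < lo (k + 1)) ∧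
      ∀ x ∈ BlockSeqIn b Nm X,
        (∀ n, ∃ m, NatLt b (hi 0) (x n) ∧ (∀ j ∈ supp b (x n), j < lo m) ∧
          NatLt b (hi m) (x (n + 1))) →
        x ∈ Expand Nm Δ B :=
  intervals_of_IWinsF_general 𝕂 b Nm hNadd hNsmul X B hB Δ hΔ
end

section
/- The class of strategically Ramsey subsets of E^∞ is closed under countable unions: if 𝒜ₙ ⊆ E^∞ is strategically Ramsey for every n ∈ ℕ, then ⋃ₙ 𝒜ₙ is strategically Ramsey. -/
/-!
Three fusion arguments over the countably many finite sequences `p` produce block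
subspaces `W₃ ≤ W₂ ≤ W₁ ≤ V` such that: below `W₁` each position `z ++ p` satisfies the
dichotomy of the strategic Ramsey property for `A |p|`; each position `z ++ p` is either
accepted by `W₂` (II wins `G_{W₂}(z ++ p)` into `⋃ₙ Aₙ`) or rejected (no block subspace of
`W₂` accepts it); and a rejected position stays rejected after any vector of `W₃` of high
enough support. If `z` is accepted, II wins below `W₃`. Otherwise I plays in `F_{W₃}(z)` high
enough to keep the position rejected and, from each reached position `z ++ p`, to obey also a
strategy of I for `(A |p|)ᶜ`, which exists because II cannot win `A |p| ⊆ ⋃ₙ Aₙ` from a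
rejected position. The outcome avoids every `Aₙ`.
-/

open Submodule Set

variable {𝔽 : Type} [Field 𝔽] {E : Type} [AddCommGroup E] [Module 𝔽 E]
  {b : Module.Basis ℕ 𝔽 E}

variable (b) in
noncomputable def suppMax (x : E) : ℕ :=
  (supp b x).sup id

lemma le_suppMax {x : E} {n : ℕ} (h : n ∈ supp b x) : n ≤ suppMax b x :=
  Finset.le_sup (f := id) h

lemma suppMax_mem {x : E} (hx : x ≠ 0) : suppMax b x ∈ supp b x := by
  have hne : (supp b x).Nonempty := by
    simpa [supp, Finsupp.support_nonempty_iff] using hx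
  obtain ⟨n, hn, h⟩ := Finset.exists_mem_eq_sup (supp b x) hne id
  rwa [suppMax, h]

lemma NatLt.mono {k k' : ℕ} {x : E} (hx : NatLt b k x) (h : k' ≤ k) : NatLt b k' x :=
  fun n hn => h.trans_lt (hx n hn)

lemma vecLt_of_natLt_suppMax {x y : E} (h : NatLt b (suppMax b x) y) : VecLt b x y :=
  fun _ hm n hn => (le_suppMax hm).trans_lt (h n hn)

lemma VecLt.natLt_suppMax {x y : E} (h : VecLt b x y) (hx : x ≠ 0) :
    NatLt b (suppMax b x) y :=
  h _ (suppMax_mem hx)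

lemma IsFinBlockSeq.append_singleton {l : List E} {y : E} (hl : IsFinBlockSeq b l)
    (hy : y ≠ 0) (hly : ∀ a ∈ l, VecLt b a y) : IsFinBlockSeq b (l ++ [y]) := by
  refine ⟨fun x hx => ?_, ?_⟩
  · rcases List.mem_append.1 hx with h | h
    · exact hl.1 x h
    · rwa [List.mem_singleton.1 h]
  · refine List.isChain_append.2 ⟨hl.2, List.isChain_singleton _, fun a ha c hc => ?_⟩
    obtain rfl : y = c := by simpa using hc
    exact hly a (List.mem_of_mem_getLast? ha)

variable (b) in
noncomputable def supportAbove (k : ℕ) : Submodule 𝔽 E :=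
  (Finsupp.supported 𝔽 𝔽 (Ioi k)).comap (b.repr : E →ₗ[𝔽] ℕ →₀ 𝔽)

lemma mem_supportAbove {k : ℕ} {x : E} : x ∈ supportAbove b k ↔ NatLt b k x := by
  simp [supportAbove, Finsupp.mem_supported, NatLt, supp, Set.subset_def]

lemma supportAbove_anti : Antitone (supportAbove b) :=
  fun _ _ h _ hx => mem_supportAbove.2 ((mem_supportAbove.1 hx).mono h)

lemma supportAbove_eq_ker (k : ℕ) : supportAbove b k =
    LinearMap.ker (LinearMap.pi fun i : Fin (k + 1) =>
      Finsupp.lapply (i : ℕ) ∘ₗ (b.repr : E →ₗ[𝔽] ℕ →₀ 𝔽)) := by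
  ext x
  simp [supportAbove, Finsupp.mem_supported', funext_iff, Fin.forall_iff]

lemma not_finiteDimensional_inf_supportAbove {Y : Submodule 𝔽 E}
    (hY : ¬FiniteDimensional 𝔽 Y) (k : ℕ) :
    ¬FiniteDimensional 𝔽 ↥(Y ⊓ supportAbove b k) := by
  rw [supportAbove_eq_ker]
  intro hfin
  exact hY <| Module.Finite.iff_fg.2 <| fg_of_fg_map_of_fg_inf_ker _
    (Module.Finite.iff_fg.1 inferInstance) (Module.Finite.iff_fg.1 hfin)

lemma inf_supportAbove_ne_bot {Y : Submodule 𝔽 E} (hY : ¬FiniteDimensional 𝔽 Y) (k : ℕ) :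
    Y ⊓ supportAbove b k ≠ ⊥ := by
  intro h
  apply not_finiteDimensional_inf_supportAbove hY k
  rw [h]
  infer_instance

lemma IsBlockSeq.strictMono_suppMax {u : ℕ → E} (hu : IsBlockSeq b u) :
    StrictMono fun k => suppMax b (u k) :=
  strictMono_nat_of_lt_succ fun k => (hu.2 k).natLt_suppMax (hu.1 k) _ (suppMax_mem (hu.1 _))

lemma IsBlockSeq.vecLt_of_lt {u : ℕ → E} (hu : IsBlockSeq b u) {i j : ℕ} (hij : i < j) :
    VecLt b (u i) (u j) := by
  obtain ⟨j, rfl⟩ : ∃ j', j = j' + 1 := ⟨j - 1, by omega⟩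
  intro m hm n hn
  calc m ≤ suppMax b (u i) := le_suppMax hm
    _ ≤ suppMax b (u j) := hu.strictMono_suppMax.monotone (by omega)
    _ < n := (hu.2 j).natLt_suppMax (hu.1 j) n hn

lemma IsBlockSubspace.inf_supportAbove_ne_bot {X : Submodule 𝔽 E} (hX : IsBlockSubspace b X)
    (k : ℕ) : X ⊓ supportAbove b k ≠ ⊥ := by
  obtain ⟨u, hu, rfl⟩ := hX
  refine (Submodule.ne_bot_iff _).2
    ⟨u (k + 1), ⟨subset_span ⟨k + 1, rfl⟩, mem_supportAbove.2 ?_⟩, hu.1 _⟩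
  exact ((hu.2 k).natLt_suppMax (hu.1 k)).mono (hu.strictMono_suppMax.id_le k)

lemma exists_blockSeq_forall_mem (S : ℕ → Submodule 𝔽 E)
    (hS : ∀ k m, S k ⊓ supportAbove b m ≠ ⊥) :
    ∃ u : ℕ → E, IsBlockSeq b u ∧ ∀ k, u k ∈ S k := by
  choose y hy hy0 using fun k m => (Submodule.ne_bot_iff _).1 (hS k m)
  let u : ℕ → E := fun k => Nat.rec (y 0 0) (fun k x => y (k + 1) (suppMax b x)) k
  refine ⟨u, ⟨fun k => ?_, fun k => ?_⟩, fun k => ?_⟩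
  · cases k <;> exact hy0 _ _
  · exact vecLt_of_natLt_suppMax (mem_supportAbove.1 (hy (k + 1) _).2)
  · cases k <;> exact (hy _ _).1

lemma exists_blockSubspace_le {S : Submodule 𝔽 E} (hS : ∀ m, S ⊓ supportAbove b m ≠ ⊥) :
    ∃ X ≤ S, IsBlockSubspace b X := by
  obtain ⟨u, hu, huS⟩ := exists_blockSeq_forall_mem (fun _ => S) fun _ => hS
  exact ⟨span 𝔽 (range u), span_le.2 (range_subset_iff.2 huS), u, hu, rfl⟩

variable (b) in
def AlmostLE (W X : Submodule 𝔽 E) : Prop :=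
  ∃ M, W ⊓ supportAbove b M ≤ X

lemma AlmostLE.trans_le {W X Y : Submodule 𝔽 E} (h : AlmostLE b W X) (hXY : X ≤ Y) :
    AlmostLE b W Y :=
  h.imp fun _ hM => hM.trans hXY

/-- The vectors of `span (range u)` supported above `suppMax (u k)` have no component along
the first `k + 1` blocks, which are supported at or below that bound. -/
lemma IsBlockSeq.almostLE_span_tail {u : ℕ → E} (hu : IsBlockSeq b u) (k : ℕ) :
    AlmostLE b (span 𝔽 (range u)) (span 𝔽 (u '' Ioi k)) := by
  set M := suppMax b (u k)
  refine ⟨M, fun x hx => ?_⟩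
  obtain ⟨hx, hxM⟩ := mem_inf.1 hx
  have hsplit : range u = u '' Iic k ∪ u '' Ioi k := by
    rw [← image_union, Iic_union_Ioi, image_univ]
  rw [hsplit, span_union, mem_sup] at hx
  obtain ⟨a, ha, c, hc, rfl⟩ := hx
  have hc_high : c ∈ supportAbove b M := by
    refine span_le.2 ?_ hc
    rintro _ ⟨j, hj, rfl⟩
    exact mem_supportAbove.2 ((hu.vecLt_of_lt hj).natLt_suppMax (hu.1 k))
  have ha_low : b.repr a ∈ Finsupp.supported 𝔽 𝔽 (Iic M) := by
    refine span_le (p := (Finsupp.supported 𝔽 𝔽 (Iic M)).comap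
      (b.repr : E →ₗ[𝔽] ℕ →₀ 𝔽)) |>.2 ?_ ha
    rintro _ ⟨j, hj, rfl⟩
    refine (Finsupp.mem_supported 𝔽 _).2 fun n hn => ?_
    rcases (mem_Iic.1 hj).lt_or_eq with hjk | rfl
    · exact (hu.vecLt_of_lt hjk n hn _ (suppMax_mem (hu.1 k))).le
    · exact le_suppMax hn
  have ha_high : a ∈ supportAbove b M := by
    simpa using (supportAbove b M).sub_mem hxM hc_high
  have ha0 : a = 0 := b.repr.map_eq_zero_iff.1 <| disjoint_def.1
    (Finsupp.disjoint_supported_supported (Iic_disjoint_Ioi le_rfl)) _ ha_low ha_high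
  simpa [ha0] using hc

section Histories

variable {α : Type*}

@[simp]
lemma hist_length (x : ℕ → α) (n : ℕ) : (hist x n).length = n := by
  simp [hist]

lemma hist_succ (x : ℕ → α) (n : ℕ) : hist x (n + 1) = hist x n ++ [x n] := by
  rw [hist, List.ofFn_succ_last]
  rfl

lemma hist_succ' (x : ℕ → α) (n : ℕ) :
    hist x (n + 1) = x 0 :: hist (fun j => x (j + 1)) n := by
  simp [hist, List.ofFn_succ]

lemma map_hist {β : Type*} (f : α → β) (x : ℕ → α) (n : ℕ) :
    (hist x n).map f = hist (fun i => f (x i)) n := by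
  simp [hist, List.map_ofFn, Function.comp_def]

lemma take_hist (x : ℕ → α) {m n : ℕ} (h : m ≤ n) : (hist x n).take m = hist x m :=
  List.ext_getElem (by simp [h]) fun i _ _ => by simp [hist]

lemma drop_hist (x : ℕ → α) (n i : ℕ) :
    (hist x (n + i)).drop n = hist (fun j => x (n + j)) i :=
  List.ext_getElem (by simp) fun j _ _ => by simp [hist]

lemma prefCat_append (l₁ l₂ : List α) (x : ℕ → α) :
    prefCat (l₁ ++ l₂) x = prefCat l₁ (prefCat l₂ x) := by
  funext n
  simp only [prefCat, List.length_append, List.get_eq_getElem]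
  split_ifs <;> simp_all <;> first | omega | (congr 1; omega)

lemma prefCat_hist (x : ℕ → α) (n : ℕ) : prefCat (hist x n) (fun i => x (n + i)) = x := by
  funext m
  simp only [prefCat, hist_length, List.get_eq_getElem]
  split_ifs
  · simp [hist]
  · congr 1; omega

end Histories

variable (b) in
def IsFPlay (X : Submodule 𝔽 E) (σ : List E → ℕ) (x : ℕ → E) : Prop :=
  ∀ i, x i ∈ X ∧ x i ≠ 0 ∧ NatLt b (σ (hist x i)) (x i) ∧ VecLt b (x i) (x (i + 1))

lemma IsFPlay.shift {X : Submodule 𝔽 E} {σ τ : List E → ℕ} {x : ℕ → E}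
    (hx : IsFPlay b X σ x) (n : ℕ)
    (hτ : ∀ i, τ (hist (fun j => x (n + j)) i) ≤ σ (hist x (n + i))) :
    IsFPlay b X τ (fun j => x (n + j)) := fun i =>
  let ⟨hxX, hx0, hxσ, hxx⟩ := hx (n + i)
  ⟨hxX, hx0, hxσ.mono (hτ i), hxx⟩

lemma IIWinsG.mono {X : Submodule 𝔽 E} {pre : List E} {A B : Set (ℕ → E)}
    (h : IIWinsG b X pre A) (hAB : A ⊆ B) : IIWinsG b X pre B :=
  h.imp fun _ hσ Y hY => (hσ Y hY).imp_right (@hAB _)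

lemma IIWinsG.anti {X X' : Submodule 𝔽 E} {pre : List E} {A : Set (ℕ → E)}
    (h : IIWinsG b X pre A) (hX' : X' ≤ X) : IIWinsG b X' pre A :=
  h.imp fun _ hσ Y hY => hσ Y fun i => ⟨(hY i).1.trans hX', (hY i).2⟩

lemma IWinsF.anti {X X' : Submodule 𝔽 E} {pre : List E} {A : Set (ℕ → E)}
    (h : IWinsF b X pre A) (hX' : X' ≤ X) : IWinsF b X' pre A :=
  h.imp fun _ hσ x hx => hσ x fun i => ⟨hX' (hx i).1, (hx i).2⟩

/-- II follows the strategy for `X`, fed with I's subspaces cut down to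
`Y i ⊓ supportAbove b M`: these are still infinite-dimensional and lie in `X`. -/
lemma IIWinsG.of_almostLE {W X : Submodule 𝔽 E} {pre : List E} {A : Set (ℕ → E)}
    (h : IIWinsG b X pre A) (hWX : AlmostLE b W X) : IIWinsG b W pre A := by
  obtain ⟨M, hM⟩ := hWX
  obtain ⟨σ, hσ⟩ := h
  refine ⟨fun l => σ (l.map (· ⊓ supportAbove b M)), fun Y hY => ?_⟩
  have hY' : ∀ i, Y i ⊓ supportAbove b M ≤ X ∧
      ¬FiniteDimensional 𝔽 ↥(Y i ⊓ supportAbove b M) := fun i =>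
    ⟨(inf_le_inf_right _ (hY i).1).trans hM, not_finiteDimensional_inf_supportAbove (hY i).2 M⟩
  obtain ⟨hmoves, hout⟩ := hσ _ hY'
  simp only [map_hist]
  exact ⟨fun i => ⟨(hmoves i).1.1, (hmoves i).2⟩, hout⟩

lemma IWinsF.of_almostLE {W X : Submodule 𝔽 E} {pre : List E} {A : Set (ℕ → E)}
    (h : IWinsF b X pre A) (hWX : AlmostLE b W X) : IWinsF b W pre A := by
  obtain ⟨M, hM⟩ := hWX
  obtain ⟨σ, hσ⟩ := h
  refine ⟨fun l => σ l + M, fun x hx => ?_⟩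
  have hx' : IsFPlay b X σ x := fun i =>
    let ⟨hxW, hx0, hxσ, hxx⟩ := hx i
    ⟨hM ⟨hxW, mem_supportAbove.2 (hxσ.mono (Nat.le_add_left _ _))⟩, hx0,
      hxσ.mono (Nat.le_add_right _ _), hxx⟩
  obtain ⟨hmono, hout⟩ := hσ x hx'
  exact ⟨fun i => Nat.add_lt_add_right (hmono i) M, hout⟩

/-- II answers I's first subspace `Y₀` with a good vector `y`, and then follows a winning
strategy for `G_X(pre ++ [y])`, fed with I's later subspaces cut down above `y`. -/
lemma IIWinsG_of_forall_exists_append {X : Submodule 𝔽 E} {pre : List E} {A : Set (ℕ → E)}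
    (h : ∀ Y ≤ X, ¬FiniteDimensional 𝔽 Y → ∃ y ∈ Y, y ≠ 0 ∧ IIWinsG b X (pre ++ [y]) A) :
    IIWinsG b X pre A := by
  classical
  let good (Y : Submodule 𝔽 E) : Prop := Y ≤ X ∧ ¬FiniteDimensional 𝔽 Y
  choose! y hyY hy0 s hs using fun Y (hY : good Y) => h Y hY.1 hY.2
  let cut (Y : Submodule 𝔽 E) : Submodule 𝔽 E → Submodule 𝔽 E :=
    (· ⊓ supportAbove b (suppMax b (y Y)))
  let σ : List (Submodule 𝔽 E) → E := fun l => match l with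
    | [] => 0
    | Y :: rest => if rest = [] then y Y else s Y (rest.map (cut Y))
  refine ⟨σ, fun Y hY => ?_⟩
  set Y' : ℕ → Submodule 𝔽 E := fun i => cut (Y 0) (Y (i + 1))
  have hY' : ∀ i, Y' i ≤ X ∧ ¬FiniteDimensional 𝔽 ↥(Y' i) := fun i =>
    ⟨inf_le_left.trans (hY (i + 1)).1, not_finiteDimensional_inf_supportAbove (hY (i + 1)).2 _⟩
  obtain ⟨hmoves, hout⟩ := hs (Y 0) (hY 0) Y' hY'
  have hσ₀ : σ (hist Y 1) = y (Y 0) := rfl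
  have hσ : ∀ i, σ (hist Y (i + 2)) = s (Y 0) (hist Y' (i + 1)) := fun i => by
    have hne : hist (fun j => Y (j + 1)) (i + 1) ≠ [] := List.ne_nil_of_length_pos (by simp)
    simp only [σ, hist_succ' Y (i + 1), if_neg hne, map_hist]
    rfl
  refine ⟨fun i => ?_, ?_⟩
  · rcases i with _ | i
    · refine ⟨hyY _ (hY 0), hy0 _ (hY 0), ?_⟩
      rw [hσ₀, hσ 0]
      exact vecLt_of_natLt_suppMax (mem_supportAbove.1 (hmoves 0).1.2)
    · rw [hσ i, hσ (i + 1)]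
      exact ⟨(hmoves i).1.1, (hmoves i).2⟩
  · convert hout using 1
    rw [prefCat_append]
    congr 1
    funext i
    rcases i with _ | i
    · rfl
    · simp [prefCat, hσ]

variable (b) in
def Rejects (X : Submodule 𝔽 E) (pre : List E) (A : Set (ℕ → E)) : Prop :=
  ∀ Y ≤ X, IsBlockSubspace b Y → ¬IIWinsG b Y pre A

lemma Rejects.of_almostLE {W X : Submodule 𝔽 E} {pre : List E} {A : Set (ℕ → E)}
    (h : Rejects b X pre A) (hWX : AlmostLE b W X) : Rejects b W pre A := by
  obtain ⟨M, hM⟩ := hWX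
  intro Y hYW hY hwin
  have hY' : ∀ m, Y ⊓ supportAbove b M ⊓ supportAbove b m ≠ ⊥ := fun m =>
    ne_bot_of_le_ne_bot (hY.inf_supportAbove_ne_bot (max M m)) <|
      le_inf (inf_le_inf_left _ (supportAbove_anti (le_max_left M m)))
        (inf_le_right.trans (supportAbove_anti (le_max_right M m)))
  obtain ⟨Y', hY'Y, hY'⟩ := exists_blockSubspace_le hY'
  exact h Y' (hY'Y.trans ((inf_le_inf_right _ hYW).trans hM)) hY'
    (hwin.anti (hY'Y.trans inf_le_left))

/-- `W` is spanned by a block sequence `u` with `u k` in the `k`-th space of a decreasing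
chain of witnesses. -/
theorem exists_blockSubspace_le_forall {ι : Type*} [Countable ι] {V : Submodule 𝔽 E}
    (hV : IsBlockSubspace b V) (P : ι → Submodule 𝔽 E → Prop)
    (hdense : ∀ i X, X ≤ V → IsBlockSubspace b X → ∃ X' ≤ X, IsBlockSubspace b X' ∧ P i X')
    (hstable : ∀ i {W X}, AlmostLE b W X → P i X → P i W) :
    ∃ W ≤ V, IsBlockSubspace b W ∧ ∀ i, P i W := by
  rcases isEmpty_or_nonempty ι with hι | hι
  · exact ⟨V, le_rfl, hV, isEmptyElim⟩
  obtain ⟨e, he⟩ := exists_surjective_nat ι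
  choose! F hFX hF hFP using hdense
  let C : ℕ → Submodule 𝔽 E := fun k => Nat.rec (F (e 0) V) (fun k X => F (e (k + 1)) X) k
  have hC : ∀ k, C k ≤ V ∧ IsBlockSubspace b (C k) ∧ P (e k) (C k) := by
    intro k
    induction k with
    | zero => exact ⟨hFX _ _ le_rfl hV, hF _ _ le_rfl hV, hFP _ _ le_rfl hV⟩
    | succ k ih =>
      exact ⟨(hFX _ _ ih.1 ih.2.1).trans ih.1, hF _ _ ih.1 ih.2.1, hFP _ _ ih.1 ih.2.1⟩
  have hC_anti : Antitone C := antitone_nat_of_succ_le fun k => hFX _ _ (hC k).1 (hC k).2.1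
  obtain ⟨u, hu, huC⟩ :=
    exists_blockSeq_forall_mem C fun k m => (hC k).2.1.inf_supportAbove_ne_bot m
  refine ⟨span 𝔽 (range u), span_le.2 (range_subset_iff.2 fun k => (hC k).1 (huC k)),
    ⟨u, hu, rfl⟩, fun i => ?_⟩
  obtain ⟨k, rfl⟩ := he i
  refine hstable _ ((hu.almostLE_span_tail k).trans_le (span_le.2 ?_)) (hC k).2.2
  rintro _ ⟨j, hj, rfl⟩
  exact hC_anti (le_of_lt hj) (huC j)

theorem exists_blockSubspace_le_forall_ramsey {ι : Type*} [Countable ι] {V : Submodule 𝔽 E}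
    (hV : IsBlockSubspace b V) (A : ι → Set (ℕ → E))
    (hA : ∀ i, StrategicallyRamsey b (A i)) (pre : ι → List E) :
    ∃ W ≤ V, IsBlockSubspace b W ∧ ∀ i, IsFinBlockSeq b (pre i) →
      IIWinsG b W (pre i) (A i) ∨ IWinsF b W (pre i) (A i)ᶜ := by
  refine exists_blockSubspace_le_forall hV _ (fun i X _ hX => ?_)
    fun i _ _ hWX h hpre => (h hpre).imp (·.of_almostLE hWX) (·.of_almostLE hWX)
  by_cases hpre : IsFinBlockSeq b (pre i)
  · obtain ⟨X', hX'X, hX', hdich⟩ := hA i X hX (pre i) hpre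
    exact ⟨X', hX'X, hX', fun _ => hdich⟩
  · exact ⟨X, le_rfl, hX, fun h => absurd h hpre⟩

theorem exists_blockSubspace_le_forall_accepts_or_rejects {ι : Type*} [Countable ι]
    {V : Submodule 𝔽 E} (hV : IsBlockSubspace b V) (pre : ι → List E) (A : Set (ℕ → E)) :
    ∃ W ≤ V, IsBlockSubspace b W ∧ ∀ i, IIWinsG b W (pre i) A ∨ Rejects b W (pre i) A := by
  refine exists_blockSubspace_le_forall hV _ (fun i X _ hX => ?_)
    fun i _ _ hWX h => h.imp (·.of_almostLE hWX) (·.of_almostLE hWX)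
  by_cases hacc : ∃ X' ≤ X, IsBlockSubspace b X' ∧ IIWinsG b X' (pre i) A
  · obtain ⟨X', hX'X, hX', hwin⟩ := hacc
    exact ⟨X', hX'X, hX', Or.inl hwin⟩
  · exact ⟨X, le_rfl, hX, Or.inr fun Y hYX hY hwin => hacc ⟨Y, hYX, hY, hwin⟩⟩

/-- II cannot win `G_X(pre)` for a rejected `pre`, so by `IIWinsG_of_forall_exists_append`
some infinite-dimensional `Y ≤ X` contains no `y` with `pre ++ [y]` accepted. -/
theorem exists_blockSubspace_le_forall_rejects_append {ι : Type*} [Countable ι]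
    {V : Submodule 𝔽 E} (hV : IsBlockSubspace b V) (pre : ι → List E) (A : Set (ℕ → E)) :
    ∃ W ≤ V, IsBlockSubspace b W ∧ ∀ i, Rejects b V (pre i) A →
      ∃ K, ∀ y ∈ W ⊓ supportAbove b K, y ≠ 0 → ¬IIWinsG b V (pre i ++ [y]) A := by
  refine exists_blockSubspace_le_forall hV _ (fun i X hXV hX => ?_) ?_
  · by_cases hrej : Rejects b V (pre i) A
    · by_cases hY : ∃ Y ≤ X, ¬FiniteDimensional 𝔽 Y ∧
          ∀ y ∈ Y, y ≠ 0 → ¬IIWinsG b V (pre i ++ [y]) A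
      · obtain ⟨Y, hYX, hYinf, hYrej⟩ := hY
        obtain ⟨X', hX'Y, hX'⟩ :=
          exists_blockSubspace_le (inf_supportAbove_ne_bot (b := b) hYinf)
        exact ⟨X', hX'Y.trans hYX, hX', fun _ => ⟨0, fun y hy => hYrej y (hX'Y hy.1)⟩⟩
      · push Not at hY
        refine absurd (IIWinsG_of_forall_exists_append fun Y hYX hYinf => ?_) (hrej X hXV hX)
        obtain ⟨y, hyY, hy0, hwin⟩ := hY Y hYX hYinf
        exact ⟨y, hyY, hy0, hwin.anti hXV⟩
    · exact ⟨X, le_rfl, hX, fun h => absurd h hrej⟩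
  · rintro i W X ⟨M, hM⟩ h hrej
    obtain ⟨K, hK⟩ := h hrej
    refine ⟨max K M, fun y hy => hK y ⟨hM ⟨hy.1, ?_⟩, ?_⟩⟩
    · exact supportAbove_anti (le_max_right K M) hy.2
    · exact supportAbove_anti (le_max_left K M) hy.2

lemma exists_ge_lt_hist_succ {α : Type*} (g : List α → ℕ) :
    ∃ σ : List α → ℕ, (∀ l, g l ≤ σ l) ∧
      ∀ (x : ℕ → α) i, σ (hist x i) < σ (hist x (i + 1)) := by
  refine ⟨fun l => ∑ j ∈ Finset.range (l.length + 1), (g (l.take j) + 1), fun l => ?_,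
    fun x i => ?_⟩
  · dsimp only
    have := Finset.single_le_sum (f := fun j => g (l.take j) + 1) (fun _ _ => Nat.zero_le _)
      (Finset.self_mem_range_succ l.length)
    simp only [List.take_length] at this
    omega
  · have hsum : ∀ n, ∑ j ∈ Finset.range (n + 1), (g ((hist x n).take j) + 1) =
        ∑ j ∈ Finset.range (n + 1), (g (hist x j) + 1) := fun n =>
      Finset.sum_congr rfl fun j hj => by
        rw [take_hist x (Nat.lt_succ_iff.1 (Finset.mem_range.1 hj))]
    simp only [hist_length, hsum, Finset.sum_range_succ _ (i + 1)]
    omega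

/-- I keeps the position in `bad`, and from each reached position `p` (of length `n`)
onwards also obeys a winning strategy for `F_W(z ++ p)` into `(A n)ᶜ`; the tail of the play
from `p` on then keeps the outcome out of `A n`. -/
theorem IWinsF_compl_iUnion {W : Submodule 𝔽 E} {z : List E} (hz : IsFinBlockSeq b z)
    (A : ℕ → Set (ℕ → E)) (bad : List E → Prop) (hnil : bad [])
    (hext : ∀ p, bad p → ∃ K, ∀ y ∈ W ⊓ supportAbove b K, y ≠ 0 → bad (p ++ [y]))
    (hwin : ∀ p, bad p → IsFinBlockSeq b (z ++ p) → IWinsF b W (z ++ p) (A p.length)ᶜ) :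
    IWinsF b W z (⋃ n, A n)ᶜ := by
  choose! K hK using hext
  choose! τ hτ using hwin
  let g : List E → ℕ := fun l => ((z ++ l).map (suppMax b)).sum + K l +
    ∑ m ∈ Finset.range (l.length + 1), τ (l.take m) (l.drop m)
  obtain ⟨σ, hgσ, hσ⟩ := exists_ge_lt_hist_succ g
  refine ⟨σ, fun x hx => ⟨hσ x, ?_⟩⟩
  have hbad : ∀ i, bad (hist x i) ∧ IsFinBlockSeq b (z ++ hist x i) := by
    intro i
    induction i with
    | zero => exact ⟨hnil, by simpa [hist] using hz⟩
    | succ i ih =>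
      obtain ⟨hxW, hx0, hxσ, -⟩ := hx i
      have hxg := hxσ.mono (hgσ _)
      rw [hist_succ, ← List.append_assoc]
      refine ⟨hK _ ih.1 _ ⟨hxW, mem_supportAbove.2 (hxg.mono ?_)⟩ hx0,
        ih.2.append_singleton hx0 fun a ha => vecLt_of_natLt_suppMax (hxg.mono ?_)⟩
      · simp only [g]
        omega
      · exact (List.le_sum_of_mem (List.mem_map_of_mem ha)).trans (by simp only [g]; omega)
  simp only [mem_compl_iff, mem_iUnion, not_exists]
  intro n
  obtain ⟨hn, hnz⟩ := hbad n
  have hτσ : ∀ i, τ (hist x n) (hist (fun j => x (n + j)) i) ≤ σ (hist x (n + i)) := by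
    intro i
    refine le_trans ?_ (hgσ _)
    have := Finset.single_le_sum (f := fun m => τ ((hist x (n + i)).take m)
      ((hist x (n + i)).drop m)) (fun _ _ => Nat.zero_le _)
      (Finset.mem_range.2 (show n < (hist x (n + i)).length + 1 by simp))
    simp only [take_hist x (Nat.le_add_right n i), drop_hist] at this
    simp only [g]
    omega
  have hout := (hτ _ hn hnz _ (IsFPlay.shift hx n hτσ)).2
  rwa [prefCat_append, prefCat_hist, hist_length] at hout

theorem strategicallyRamsey_iUnion
    {𝔽 : Type} [Field 𝔽] [Countable 𝔽]
    {E : Type} [AddCommGroup E] [Module 𝔽 E]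
    (b : Module.Basis ℕ 𝔽 E) (A : ℕ → Set (ℕ → E))
    (hA : ∀ n, StrategicallyRamsey b (A n)) :
    StrategicallyRamsey b (⋃ n, A n) := by
  intro V hV z hz
  have : Countable E := Countable.of_equiv (ℕ →₀ 𝔽) b.repr.toEquiv.symm
  obtain ⟨W₁, hW₁V, hW₁, hdich⟩ :=
    exists_blockSubspace_le_forall_ramsey hV (fun p : List E => A p.length) (fun _ => hA _)
      (z ++ ·)
  obtain ⟨W₂, hW₂W₁, hW₂, hdecide⟩ :=
    exists_blockSubspace_le_forall_accepts_or_rejects hW₁ (z ++ ·) (⋃ n, A n)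
  obtain ⟨W₃, hW₃W₂, hW₃, hextend⟩ :=
    exists_blockSubspace_le_forall_rejects_append hW₂ (z ++ ·) (⋃ n, A n)
  refine ⟨W₃, hW₃W₂.trans (hW₂W₁.trans hW₁V), hW₃, ?_⟩
  rcases hdecide [] with hacc | hrej
  · exact Or.inl (by simpa using hacc.anti hW₃W₂)
  refine Or.inr (IWinsF_compl_iUnion hz A (fun p => Rejects b W₂ (z ++ p) (⋃ n, A n))
    (by simpa using hrej) (fun p hp => ?_) fun p hp hpz => ?_)
  · obtain ⟨K, hK⟩ := hextend p hp
    refine ⟨K, fun y hy hy0 => (hdecide (p ++ [y])).resolve_left ?_⟩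
    simpa using hK y hy hy0
  · refine ((hdich p hpz).resolve_left fun hwin => ?_).anti (hW₃W₂.trans hW₂W₁)
    exact hp W₂ le_rfl hW₂ ((hwin.mono (subset_iUnion A p.length)).anti hW₂W₁)
end
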